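/- For every integer n ≥ 1 and every word u of length n−1 over the alphabet {a,b}, the number of Catalan tableaux of index n whose profile is u equals the number of binary trees with n vertices whose canopy is u. -/

import Mathlib

/-- A binary tree: empty, or a root with a left and a right subtree. -/
inductive BinTree : Type
  | nil : BinTree
  | node : BinTree → BinTree → BinTree
  deriving DecidableEq

/-- Number of vertices of a binary tree. -/
def BinTree.size : BinTree → ℕ
  | .nil => 0
  | .node l r => l.size + r.size + 1

/-- Length (number of vertices) of the left branch. -/
def BinTree.leftBranchLen : BinTree → ℕ
  | .nil => 0
  | .node l _ => l.leftBranchLen + 1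

/-- Length (number of vertices) of the right branch. -/
def BinTree.rightBranchLen : BinTree → ℕ
  | .nil => 0
  | .node _ r => r.rightBranchLen + 1

/-- Word over {a,b} (a = `true`, b = `false`) reading the vertices in symmetric
(in-)order; a vertex contributes `true` iff it has a right child. -/
def BinTree.canopyFull : BinTree → List Bool
  | .nil => []
  | .node l r => l.canopyFull ++ (decide (r ≠ BinTree.nil)) :: r.canopyFull

/-- The canopy of a binary tree with `n` vertices: the word `u₁ … u_{n-1}` over
{a = `true`, b = `false`} with `uᵢ = a` iff the `i`-th vertex in symmetric order
has a right child.  (The last vertex in symmetric order never has a right child,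
so it is dropped.) -/
def BinTree.canopy (B : BinTree) : List Bool := B.canopyFull.dropLast

/-- A Catalan tableau of index `n`: a partition `λ₁ ≥ … ≥ λ_k` with `λ₁ = n - k`,
drawn right-justified inside the `k × (n-k)` rectangle (rows bottom to top, row `i`
having `lam i` cells, occupying columns `j` with `m - lam i ≤ j < m` where
`m = n - k`), filled with 0's (`false`) and 1's (`true`) such that every column
contains exactly one 1 and no 0 has both a 1 below it in its column and a 1 to
its right in its row.  Entries outside the diagram are forced to `false`. -/
structure CatalanTableau (n : ℕ) where
  k : ℕ
  m : ℕ
  hk : 0 < k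
  hkm : k + m = n
  lam : Fin k → ℕ
  lam_le : ∀ i, lam i ≤ m
  lam_first : lam ⟨0, hk⟩ = m
  lam_anti : ∀ i j : Fin k, i ≤ j → lam j ≤ lam i
  f : Fin k → Fin m → Bool
  f_outside : ∀ (i : Fin k) (j : Fin m), (j : ℕ) < m - lam i → f i j = false
  col_one : ∀ j : Fin m, ∃! i : Fin k, f i j = true
  no_bad : ∀ (i : Fin k) (j : Fin m), m - lam i ≤ (j : ℕ) → f i j = false →
    ¬ ((∃ i' : Fin k, i' < i ∧ f i' j = true) ∧
       (∃ j' : Fin m, (j : ℕ) < (j' : ℕ) ∧ f i j' = true))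

/-- The profile of a Catalan tableau: the NW border of its Ferrers diagram read
from the bottom-left corner of the rectangle to its top-right corner
(a = `true` for a north step, b = `false` for an east step), with the first
letter (always a north step) deleted. -/
def CatalanTableau.profile {n : ℕ} (T : CatalanTableau n) : List Bool :=
  ((List.finRange T.k).flatMap (fun i =>
    true :: List.replicate
      (T.lam i - (if h : (i : ℕ) + 1 < T.k then T.lam ⟨(i : ℕ) + 1, h⟩ else 0)) false)).tail

/-- Number of 1's in the first (bottom) row of a Catalan tableau. -/
noncomputable def CatalanTableau.onesFirstRow {n : ℕ} (T : CatalanTableau n) : ℕ :=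
  Nat.card {j : Fin T.m // T.f ⟨0, T.hk⟩ j = true}

/-- An entry is restricted if it is a 0 (in a cell of the diagram) lying above
some 1 in its column. -/
def CatalanTableau.Restricted {n : ℕ} (T : CatalanTableau n)
    (i : Fin T.k) (j : Fin T.m) : Prop :=
  T.m - T.lam i ≤ (j : ℕ) ∧ T.f i j = false ∧ ∃ i' : Fin T.k, i' < i ∧ T.f i' j = true

/-- Number of unrestricted rows (rows of the rectangle containing no restricted
entry). -/
noncomputable def CatalanTableau.unrestrictedRows {n : ℕ} (T : CatalanTableau n) : ℕ :=
  Nat.card {i : Fin T.k // ∀ j : Fin T.m, ¬ T.Restricted i j}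

/-- `weaklyBelow ω η`: the lattice paths coded by `ω`, `η` (a = `true` = north
step, b = `false` = east step, both starting at the origin) have the same
endpoints and `η` never passes strictly above `ω`. -/
def weaklyBelow (ω η : List Bool) : Prop :=
  η.length = ω.length ∧ η.count true = ω.count true ∧
    ∀ t : ℕ, (η.take t).count true ≤ (ω.take t).count true

/-- Heights at which the successive east steps of a path occur. -/
def eastHeightsAux : ℕ → List Bool → List ℕ
  | _, [] => []
  | h, true :: w => eastHeightsAux (h + 1) w
  | h, false :: w => h :: eastHeightsAux h w

def eastHeights (w : List Bool) : List ℕ := eastHeightsAux 0 w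

/-- Number of horizontal contacts of two paths: unit east edges traversed by
both paths. -/
def contacts (ω η : List Bool) : ℕ :=
  ((eastHeights ω).zip (eastHeights η)).countP (fun p => p.1 == p.2)

/-- Number of trailing north steps of a path. -/
def trailingNorth (w : List Bool) : ℕ := (w.reverse.takeWhile (· == true)).length

/-- Number of left edges, i.e. of vertices having a left child. -/
def BinTree.leftEdgeCount : BinTree → ℕ
  | .nil => 0
  | .node l r => l.leftEdgeCount + r.leftEdgeCount + (if l = BinTree.nil then 0 else 1)

/-- Number of vertices having no right child. -/
def BinTree.noRightCount : BinTree → ℕ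
  | .nil => 0
  | .node l r => l.noRightCount + r.noRightCount + (if r = BinTree.nil then 1 else 0)

/-- Symmetric-order traversal recording, for each vertex, whether it has a left
child, whether it has a right child, and its right height (the second argument
is the right height of the current root). -/
def BinTree.inorderAux : BinTree → ℕ → List (Bool × Bool × ℕ)
  | .nil, _ => []
  | .node l r, h =>
      BinTree.inorderAux l h ++
        (decide (l ≠ BinTree.nil), decide (r ≠ BinTree.nil), h) :: BinTree.inorderAux r (h + 1)

def BinTree.inorder (B : BinTree) : List (Bool × Bool × ℕ) := B.inorderAux 0

/-- The sequence `ρ₁, …, ρ_m`: right heights of the parents of the left edges,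
the left edges being ordered by their parents in symmetric order. -/
def BinTree.rhoList (B : BinTree) : List ℕ :=
  (B.inorder.filter (fun v => v.1)).map (fun v => v.2.2)

def hsAux : List (Bool × Bool × ℕ) → ℕ → List ℕ
  | [], _ => []
  | v :: rest, c => if v.2.1 then hsAux rest (c + 1) else c :: hsAux rest c

/-- The sequence `h₁, …, h_m`: for each vertex with no right child (in symmetric
order, excluding the last vertex in symmetric order), the number of vertices
preceding it in symmetric order that have a right child. -/
def BinTree.hList (B : BinTree) : List ℕ := (hsAux B.inorder 0).dropLast

/-- Leaves of the completion `γ(B)` in symmetric order, each recorded as `true`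
if it is a left child of its parent and `false` if it is a right child; the
boolean argument records whether the current subtree sits as a left child. -/
def BinTree.gammaLeavesAux : BinTree → Bool → List Bool
  | .nil, isLeft => [isLeft]
  | .node l r, _ => BinTree.gammaLeavesAux l true ++ BinTree.gammaLeavesAux r false

/-- The word of the leaves of the complete binary tree `γ(B)` in symmetric order
(a = `true` for a left child, b = `false` for a right child). -/
def BinTree.leafWord : BinTree → List Bool
  | .nil => []
  | .node l r => BinTree.gammaLeavesAux l true ++ BinTree.gammaLeavesAux r false


/-!
Let the word of a binary tree be its canopy followed by `b`, i.e. the full symmetric-order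
word. Inserting a new first vertex at depth `d ≤ ℓ` of a left branch of length `ℓ`, with the
subtree found there as its right child, prepends `a` to the word if `d < ℓ` and `b` if `d = ℓ`,
and every nonempty tree arises this way exactly once. So a tree with word `v` has exactly one
successor with word `b v` and `ℓ` successors with word `a v`, the new left branch having length
`d + 1`.

A Catalan tableau is determined by its shape, which the profile fixes, and by the row `r j` of
the 1 in each column `j`: if the columns have heights `c j`, the conditions are `1 ≤ r j ≤ c j`
and, for `j < j'`, `r j' ≤ r j` or `r j' > c j`. For the profile `b w` the leftmost column has
height 1 and its entry is forced. For the profile `a w` the two bottom rows have the same length.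
Merging them gives a filling for `w` with some number `s` of 1's in the bottom row. That filling
comes from exactly `s + 1` fillings for `a w`, one for each choice of the number `t ≤ s` of those
1's (the last ones) that stay in the bottom row. Since `s + 1` plays the role of `ℓ`, both families
satisfy the same recursion, and induction on the word gives a bijection.
-/

/-! ### Binary trees grown by a new first vertex -/

namespace BinTree

/-- Insert a new first vertex (in symmetric order) at depth `d` of the left branch; the subtree
previously found there becomes its right child. Meaningful for `d ≤ leftBranchLen`. -/
def insertLeftmost : ℕ → BinTree → BinTree
  | 0, t => node nil t
  | _ + 1, nil => node nil nil
  | d + 1, node l r => node (insertLeftmost d l) r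

def eraseLeftmost : BinTree → BinTree
  | nil => nil
  | node nil r => r
  | node (node a b) r => node (eraseLeftmost (node a b)) r

@[simp]
lemma leftBranchLen_eq_zero_iff {B : BinTree} : B.leftBranchLen = 0 ↔ B = nil := by
  cases B <;> simp [leftBranchLen]

lemma length_canopyFull (B : BinTree) : B.canopyFull.length = B.size := by
  induction B with
  | nil => rfl
  | node l r ihl ihr => simp [canopyFull, size, ihl, ihr]; omega

lemma canopyFull_eq_canopy_append {B : BinTree} (hB : B ≠ nil) :
    B.canopyFull = B.canopy ++ [false] := by
  induction B with
  | nil => exact absurd rfl hB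
  | node l r _ ihr =>
    cases r with
    | nil => simp [canopy, canopyFull]
    | node a b =>
      have ihr := ihr (by simp)
      rw [canopy] at ihr
      rw [canopy, canopyFull, ihr]
      simp only [← List.cons_append, ← List.append_assoc, List.dropLast_concat]

lemma canopyFull_eq_append_false_iff {B : BinTree} {u : List Bool} :
    B.canopyFull = u ++ [false] ↔ B.size = u.length + 1 ∧ B.canopy = u := by
  constructor
  · intro h
    refine ⟨by simp [← length_canopyFull, h], by simp [canopy, h]⟩
  · rintro ⟨hs, rfl⟩
    exact canopyFull_eq_canopy_append (by rintro rfl; simp [size] at hs)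

lemma eq_node_nil_nil_of_canopyFull {B : BinTree} (h : B.canopyFull = [false]) :
    B = node nil nil := by
  cases B with
  | nil => simp [canopyFull] at h
  | node l r => cases l <;> cases r <;> simp_all [canopyFull, List.append_eq_cons_iff]

section insertLeftmost

variable {d : ℕ} {B : BinTree}

lemma leftBranchLen_insertLeftmost (hd : d ≤ B.leftBranchLen) :
    (insertLeftmost d B).leftBranchLen = d + 1 := by
  induction d generalizing B with
  | zero => simp [insertLeftmost, leftBranchLen]
  | succ d ih =>
    cases B with
    | nil => simp [leftBranchLen] at hd
    | node l r => simp_all [insertLeftmost, leftBranchLen]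

lemma canopyFull_insertLeftmost (hd : d ≤ B.leftBranchLen) :
    (insertLeftmost d B).canopyFull = decide (d < B.leftBranchLen) :: B.canopyFull := by
  induction d generalizing B with
  | zero => simp [insertLeftmost, canopyFull, Nat.pos_iff_ne_zero]
  | succ d ih =>
    cases B with
    | nil => simp [leftBranchLen] at hd
    | node l r => simp_all [insertLeftmost, canopyFull, leftBranchLen]

lemma eraseLeftmost_insertLeftmost (hd : d ≤ B.leftBranchLen) :
    eraseLeftmost (insertLeftmost d B) = B := by
  induction d generalizing B with
  | zero => simp [insertLeftmost, eraseLeftmost]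
  | succ d ih =>
    cases B with
    | nil => simp [leftBranchLen] at hd
    | node l r =>
      simp only [leftBranchLen, Nat.add_le_add_iff_right] at hd
      cases h : insertLeftmost d l with
      | nil => cases d <;> cases l <;> simp [insertLeftmost] at h
      | node a b => rw [insertLeftmost, h, eraseLeftmost, ← h, ih hd]

lemma insertLeftmost_eraseLeftmost (hB : B ≠ nil) :
    insertLeftmost (B.leftBranchLen - 1) B.eraseLeftmost = B := by
  induction B with
  | nil => exact absurd rfl hB
  | node l r ihl _ =>
    cases l with
    | nil => simp [leftBranchLen, eraseLeftmost, insertLeftmost]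
    | node a b =>
      simp only [leftBranchLen, Nat.add_sub_cancel, eraseLeftmost] at ihl ⊢
      rw [insertLeftmost, ihl (by simp)]

lemma le_leftBranchLen_eraseLeftmost (B : BinTree) :
    B.leftBranchLen - 1 ≤ B.eraseLeftmost.leftBranchLen := by
  induction B with
  | nil => simp [eraseLeftmost]
  | node l r ihl _ =>
    cases l with
    | nil => simp [leftBranchLen]
    | node a b => simp only [leftBranchLen, eraseLeftmost] at ihl ⊢; omega

lemma canopyFull_eraseLeftmost {x : Bool} {v : List Bool} (h : B.canopyFull = x :: v) :
    B.eraseLeftmost.canopyFull = v ∧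
      x = decide (B.leftBranchLen - 1 < B.eraseLeftmost.leftBranchLen) := by
  have hB : B ≠ nil := by rintro rfl; simp [canopyFull] at h
  have := canopyFull_insertLeftmost (le_leftBranchLen_eraseLeftmost B)
  rw [insertLeftmost_eraseLeftmost hB, h, List.cons.injEq] at this
  exact ⟨this.2.symm, this.1⟩

end insertLeftmost

abbrev WithCanopyFull (v : List Bool) : Type := {B : BinTree // B.canopyFull = v}

def withCanopyFullConsFalse (v : List Bool) : WithCanopyFull v ≃ WithCanopyFull (false :: v) where
  toFun B := ⟨insertLeftmost B.1.leftBranchLen B.1, by simp [canopyFull_insertLeftmost, B.2]⟩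
  invFun B := ⟨B.1.eraseLeftmost, (canopyFull_eraseLeftmost B.2).1⟩
  left_inv B := Subtype.ext (eraseLeftmost_insertLeftmost le_rfl)
  right_inv B := by
    obtain ⟨B, hB⟩ := B
    have hne : B ≠ nil := by rintro rfl; simp [canopyFull] at hB
    have hlt := (canopyFull_eraseLeftmost hB).2
    simp only [Bool.false_eq, decide_eq_false_iff_not, not_lt] at hlt
    have heq := le_antisymm hlt (le_leftBranchLen_eraseLeftmost B)
    refine Subtype.ext ?_
    change insertLeftmost B.eraseLeftmost.leftBranchLen B.eraseLeftmost = B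
    rw [heq, insertLeftmost_eraseLeftmost hne]

lemma leftBranchLen_withCanopyFullConsFalse {v : List Bool} (B : WithCanopyFull v) :
    (withCanopyFullConsFalse v B).1.leftBranchLen = B.1.leftBranchLen + 1 :=
  leftBranchLen_insertLeftmost le_rfl

noncomputable def withCanopyFullConsTrue (v : List Bool) :
    (Σ B : WithCanopyFull v, Fin B.1.leftBranchLen) ≃ WithCanopyFull (true :: v) :=
  Equiv.ofBijective
    (fun p => ⟨insertLeftmost p.2 p.1.1, by simp [canopyFull_insertLeftmost p.2.2.le, p.1.2]⟩) <| by
    constructor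
    · rintro ⟨⟨B, hB⟩, d, hd⟩ ⟨⟨B', hB'⟩, d', hd'⟩ h
      have h' : insertLeftmost d B = insertLeftmost d' B' := congrArg Subtype.val h
      obtain rfl : B = B' := by
        simpa [eraseLeftmost_insertLeftmost, hd.le, hd'.le] using congrArg eraseLeftmost h'
      obtain rfl : d = d' := by
        simpa [leftBranchLen_insertLeftmost, hd.le, hd'.le] using congrArg leftBranchLen h'
      rfl
    · rintro ⟨B, hB⟩
      have hne : B ≠ nil := by rintro rfl; simp [canopyFull] at hB
      obtain ⟨hv, hlt⟩ := canopyFull_eraseLeftmost hB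
      exact ⟨⟨⟨B.eraseLeftmost, hv⟩, B.leftBranchLen - 1, by simpa using hlt⟩,
        Subtype.ext (insertLeftmost_eraseLeftmost hne)⟩

lemma leftBranchLen_withCanopyFullConsTrue {v : List Bool}
    (p : Σ B : WithCanopyFull v, Fin B.1.leftBranchLen) :
    (withCanopyFullConsTrue v p).1.leftBranchLen = p.2 + 1 :=
  leftBranchLen_insertLeftmost p.2.2.le

end BinTree

/-! ### Fillings of Catalan tableaux and their recursion -/

lemma eastHeightsAux_succ (h : ℕ) (v : List Bool) :
    eastHeightsAux (h + 1) v = (eastHeightsAux h v).map (· + 1) := by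
  induction v generalizing h with
  | nil => rfl
  | cons b w ih => cases b <;> simp [eastHeightsAux, ih]

lemma le_of_mem_eastHeightsAux {h y : ℕ} {v : List Bool} (hy : y ∈ eastHeightsAux h v) :
    h ≤ y := by
  induction v generalizing h with
  | nil => simp [eastHeightsAux] at hy
  | cons b w ih =>
    cases b with
    | true => exact (ih hy).trans' h.le_succ
    | false =>
      simp only [eastHeightsAux, List.mem_cons] at hy
      exact hy.elim (·.ge) ih

namespace CatalanTableau

/-- `IsFilling c r`: `r` lists, column by column from the left, the row (counted from `1` at the
bottom) of the unique 1 of a Catalan tableau whose columns have heights `c`. The 0 in row `y`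
of column `j` (present when `y ≤ c j`) would have a 1 below it when `r j < y` and a 1 to its
right when `r j' = y` for some `j' > j`; this is what the third clause forbids. -/
def IsFilling : List ℕ → List ℕ → Prop
  | [], [] => True
  | c :: cs, x :: rs => 1 ≤ x ∧ x ≤ c ∧ (∀ y ∈ rs, y ≤ x ∨ c < y) ∧ IsFilling cs rs
  | _, _ => False

/-- Column heights, from left to right, of the diagram with profile `u`: an east step of its
border at height `h` tops a column of height `h`. -/
def columnHeights (u : List Bool) : List ℕ := eastHeights (true :: u)

abbrev Filling (u : List Bool) : Type := {r : List ℕ // IsFilling (columnHeights u) r}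

lemma columnHeights_cons_false (w : List Bool) :
    columnHeights (false :: w) = 1 :: columnHeights w := rfl

lemma columnHeights_cons_true (w : List Bool) :
    columnHeights (true :: w) = (columnHeights w).map (· + 1) :=
  eastHeightsAux_succ 1 w

lemma one_le_of_mem_columnHeights {u : List Bool} {c : ℕ} (hc : c ∈ columnHeights u) : 1 ≤ c :=
  le_of_mem_eastHeightsAux hc

lemma IsFilling.one_le {cs rs : List ℕ} (h : IsFilling cs rs) : ∀ y ∈ rs, 1 ≤ y := by
  induction rs generalizing cs with
  | nil => simp
  | cons x xs ih =>
    cases cs with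
    | nil => exact h.elim
    | cons c cs => simpa [h.1] using ih h.2.2.2

lemma IsFilling.length_eq {cs rs : List ℕ} (h : IsFilling cs rs) : rs.length = cs.length := by
  induction cs generalizing rs with
  | nil => cases rs with
    | nil => rfl
    | cons x xs => exact h.elim
  | cons c cs ih => cases rs with
    | nil => exact h.elim
    | cons x xs => simp [ih h.2.2.2]

lemma IsFilling.getElem_le {cs rs : List ℕ} (h : IsFilling cs rs) {j : ℕ} (hj : j < rs.length)
    (hj' : j < cs.length) : 1 ≤ rs[j] ∧ rs[j] ≤ cs[j] := by
  induction cs generalizing rs j with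
  | nil => simp at hj'
  | cons c cs ih => cases rs with
    | nil => exact h.elim
    | cons x xs => cases j with
      | zero => exact ⟨h.1, h.2.1⟩
      | succ j => exact ih h.2.2.2 (by simpa using hj) (by simpa using hj')

lemma IsFilling.getElem_le_or_lt {cs rs : List ℕ} (h : IsFilling cs rs) {j j' : ℕ} (hjj : j < j')
    (hj' : j' < rs.length) (hjc : j < cs.length) :
    rs[j'] ≤ rs[j]'(hjj.trans hj') ∨ cs[j] < rs[j'] := by
  induction cs generalizing rs j j' with
  | nil => simp at hjc
  | cons c cs ih => cases rs with
    | nil => exact h.elim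
    | cons x xs =>
      obtain ⟨j', rfl⟩ : ∃ j'', j' = j'' + 1 := ⟨j' - 1, by omega⟩
      cases j with
      | zero => exact h.2.2.1 _ (List.getElem_mem _)
      | succ j => exact ih h.2.2.2 (by omega) (by simpa using hj') (by simpa using hjc)

lemma isFilling_of_getElem {cs rs : List ℕ} (hlen : rs.length = cs.length)
    (hle : ∀ j (hj : j < rs.length) (hj' : j < cs.length), 1 ≤ rs[j] ∧ rs[j] ≤ cs[j])
    (hlt : ∀ j j' (hjj : j < j') (hj' : j' < rs.length) (hjc : j < cs.length),
      rs[j'] ≤ rs[j]'(hjj.trans hj') ∨ cs[j] < rs[j']) :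
    IsFilling cs rs := by
  induction cs generalizing rs with
  | nil => cases rs with
    | nil => trivial
    | cons x xs => simp at hlen
  | cons c cs ih => cases rs with
    | nil => simp at hlen
    | cons x xs =>
      refine ⟨(hle 0 (by simp) (by simp)).1, (hle 0 (by simp) (by simp)).2, ?_, ?_⟩
      · intro y hy
        obtain ⟨t, ht, rfl⟩ := List.getElem_of_mem hy
        have := hlt 0 (t + 1) (by omega) (by simpa using ht) (by simp)
        simpa using this
      · refine ih (by simpa using hlen) (fun j hj hj' => ?_) (fun j j' hjj hj' hjc => ?_)
        · have := hle (j + 1) (by simpa using hj) (by simpa using hj')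
          simpa using this
        · have := hlt (j + 1) (j' + 1) (by omega) (by simpa using hj') (by simpa using hjc)
          simpa using this

lemma isFilling_one_cons_iff {cs r : List ℕ} :
    IsFilling (1 :: cs) r ↔ ∃ rs, r = 1 :: rs ∧ IsFilling cs rs := by
  constructor
  · intro h
    cases r with
    | nil => exact h.elim
    | cons x rs => exact ⟨rs, by rw [le_antisymm h.2.1 h.1], h.2.2.2⟩
  · rintro ⟨rs, rfl, h⟩
    exact ⟨le_rfl, le_rfl, fun y _ => le_or_gt y 1, h⟩

/-- Row of an entry after the two bottom rows are merged. -/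
def mergeBottom (x : ℕ) : ℕ := max (x - 1) 1

/-- Inverse of merging the two bottom rows, keeping the last `t` of the 1's of the merged bottom
row in the bottom row. -/
def splitBottom : List ℕ → ℕ → List ℕ
  | [], _ => []
  | x :: xs, t =>
    if x = 1 ∧ xs.count 1 < t then 1 :: splitBottom xs t else (x + 1) :: splitBottom xs t

lemma IsFilling.map_mergeBottom {cs rs : List ℕ} (hc : ∀ c ∈ cs, 1 ≤ c)
    (h : IsFilling (cs.map (· + 1)) rs) : IsFilling cs (rs.map mergeBottom) := by
  induction cs generalizing rs with
  | nil => cases rs with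
    | nil => trivial
    | cons x xs => exact h.elim
  | cons c cs ih =>
    cases rs with
    | nil => exact h.elim
    | cons x xs =>
      simp only [List.map_cons] at h
      obtain ⟨h1, h2, h3, h4⟩ := h
      have hc1 := hc c List.mem_cons_self
      refine ⟨by unfold mergeBottom; omega, by unfold mergeBottom; omega, ?_,
        ih (fun c hm => hc c (List.mem_cons_of_mem _ hm)) h4⟩
      simp only [List.mem_map, forall_exists_index, and_imp, forall_apply_eq_imp_iff₂]
      intro z hz
      rcases h3 z hz with h | h <;> [left; right] <;> unfold mergeBottom <;> omega

lemma count_one_map_mergeBottom {rs : List ℕ} (hrs : ∀ y ∈ rs, 1 ≤ y) :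
    (rs.map mergeBottom).count 1 = rs.count 1 + rs.count 2 := by
  induction rs with
  | nil => simp
  | cons x xs ih =>
    have hx := hrs x List.mem_cons_self
    simp only [List.map_cons, List.count_cons, beq_iff_eq, mergeBottom,
      ih fun y hy => hrs y (List.mem_cons_of_mem _ hy)]
    split_ifs <;> omega

lemma count_one_splitBottom {rs : List ℕ} (t : ℕ) (hrs : ∀ y ∈ rs, 1 ≤ y) :
    (splitBottom rs t).count 1 = min t (rs.count 1) := by
  induction rs with
  | nil => simp [splitBottom]
  | cons x xs ih =>
    have hx := hrs x List.mem_cons_self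
    have ih := ih fun y hy => hrs y (List.mem_cons_of_mem _ hy)
    simp only [splitBottom, List.count_cons, beq_iff_eq]
    split_ifs <;> simp_all [List.count_cons] <;> omega

lemma mem_splitBottom {rs : List ℕ} {t y : ℕ} (hy : y ∈ splitBottom rs t) :
    y = 1 ∨ ∃ z ∈ rs, y = z + 1 := by
  induction rs with
  | nil => simp [splitBottom] at hy
  | cons x xs ih =>
    have htail (hy : y ∈ splitBottom xs t) : y = 1 ∨ ∃ z ∈ x :: xs, y = z + 1 :=
      (ih hy).imp_right fun ⟨z, hz, e⟩ => ⟨z, List.mem_cons_of_mem _ hz, e⟩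
    simp only [splitBottom] at hy
    split_ifs at hy <;> rcases List.mem_cons.mp hy with rfl | hy
    exacts [.inl rfl, htail hy, .inr ⟨x, List.mem_cons_self, rfl⟩, htail hy]

lemma splitBottom_of_count_one_le {rs : List ℕ} {t : ℕ} (ht : rs.count 1 ≤ t) :
    splitBottom rs t = rs.map fun x => if x = 1 then 1 else x + 1 := by
  induction rs with
  | nil => rfl
  | cons x xs ih =>
    simp only [List.count_cons, beq_iff_eq] at ht
    by_cases hx : x = 1
    · simp only [hx, if_true] at ht
      simp [splitBottom, hx, ih (by omega), show xs.count 1 < t by omega]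
    · simp [splitBottom, hx, ih (by simpa [hx] using ht)]

lemma IsFilling.splitBottom {cs rs : List ℕ} (hc : ∀ c ∈ cs, 1 ≤ c) (h : IsFilling cs rs)
    (t : ℕ) : IsFilling (cs.map (· + 1)) (splitBottom rs t) := by
  induction cs generalizing rs with
  | nil => cases rs with
    | nil => trivial
    | cons x xs => exact h.elim
  | cons c cs ih =>
    cases rs with
    | nil => exact h.elim
    | cons x xs =>
      obtain ⟨h1, h2, h3, h4⟩ := h
      have hc1 := hc c List.mem_cons_self
      have htail := ih (fun c hm => hc c (List.mem_cons_of_mem _ hm)) h4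
      simp only [CatalanTableau.splitBottom, List.map_cons]
      split_ifs with hm
      · obtain ⟨rfl, hlt⟩ := hm
        refine ⟨le_rfl, by omega, ?_, htail⟩
        rw [splitBottom_of_count_one_le hlt.le]
        simp only [List.mem_map, forall_exists_index, and_imp, forall_apply_eq_imp_iff₂]
        intro z hz
        have := h4.one_le z hz
        rcases h3 z hz with h | h <;> split_ifs <;> omega
      · refine ⟨by omega, by omega, fun y hy => ?_, htail⟩
        rcases mem_splitBottom hy with rfl | ⟨z, hz, rfl⟩
        · omega
        · rcases h3 z hz with h | h <;> omega

lemma map_mergeBottom_splitBottom {rs : List ℕ} (t : ℕ) (hrs : ∀ y ∈ rs, 1 ≤ y) :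
    (splitBottom rs t).map mergeBottom = rs := by
  induction rs with
  | nil => rfl
  | cons x xs ih =>
    have hx := hrs x List.mem_cons_self
    simp only [splitBottom]
    split_ifs with hm <;>
      simp only [List.map_cons, ih fun y hy => hrs y (List.mem_cons_of_mem _ hy), mergeBottom,
        List.cons.injEq, and_true] <;> omega

/-- When the two bottom rows have equal length, no column to the right of a 1 in the bottom row
has its 1 in row 2, so merging loses nothing. -/
lemma splitBottom_map_mergeBottom {cs rs : List ℕ} (hc : ∀ c ∈ cs, 1 ≤ c)
    (h : IsFilling (cs.map (· + 1)) rs) : splitBottom (rs.map mergeBottom) (rs.count 1) = rs := by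
  induction cs generalizing rs with
  | nil => cases rs with
    | nil => rfl
    | cons x xs => exact h.elim
  | cons c cs ih =>
    cases rs with
    | nil => exact h.elim
    | cons x xs =>
      simp only [List.map_cons] at h
      obtain ⟨h1, h2, h3, h4⟩ := h
      have hc1 := hc c List.mem_cons_self
      have hcount := count_one_map_mergeBottom h4.one_le
      simp only [List.map_cons, List.count_cons, beq_iff_eq, splitBottom]
      by_cases hx : x = 1
      · subst hx
        have hno2 : xs.count 2 = 0 := List.count_eq_zero.mpr fun h2 => by
          rcases h3 2 h2 with h | h <;> omega
        have hunsplit (y : ℕ) (hy : y ∈ xs) :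
            (if mergeBottom y = 1 then 1 else mergeBottom y + 1) = y := by
          have hy1 := h4.one_le y hy
          have hy2 : y ≠ 2 := fun h => List.count_eq_zero.mp hno2 (h ▸ hy)
          unfold mergeBottom
          split <;> omega
        rw [if_pos (by simp [mergeBottom]; omega), splitBottom_of_count_one_le (by omega),
          List.map_map]
        exact congrArg _ ((List.map_congr_left (g := id) hunsplit).trans xs.map_id)
      · rw [if_neg hx, Nat.add_zero, if_neg (by omega),
          ih (fun c hm => hc c (List.mem_cons_of_mem _ hm)) h4]
        simp only [mergeBottom, List.cons.injEq, and_true]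
        omega

def fillingConsFalse (w : List Bool) : Filling w ≃ Filling (false :: w) where
  toFun r := ⟨1 :: r.1, isFilling_one_cons_iff.mpr ⟨r.1, rfl, r.2⟩⟩
  invFun r := ⟨r.1.tail, by
    obtain ⟨rs, hr, h⟩ := isFilling_one_cons_iff.mp r.2
    rwa [hr]⟩
  left_inv r := rfl
  right_inv r := by
    obtain ⟨rs, hr, -⟩ := isFilling_one_cons_iff.mp r.2
    exact Subtype.ext (by simp [hr])

lemma count_one_fillingConsFalse {w : List Bool} (r : Filling w) :
    (fillingConsFalse w r).1.count 1 = r.1.count 1 + 1 :=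
  List.count_cons_self

noncomputable def fillingConsTrue (w : List Bool) :
    (Σ r : Filling w, Fin (r.1.count 1 + 1)) ≃ Filling (true :: w) :=
  have hc (c : ℕ) (hc : c ∈ columnHeights w) : 1 ≤ c := one_le_of_mem_columnHeights hc
  Equiv.ofBijective (fun p => ⟨splitBottom p.1.1 p.2, by
      rw [columnHeights_cons_true]; exact p.1.2.splitBottom hc p.2⟩) <| by
    constructor
    · rintro ⟨⟨r, hr⟩, t, ht⟩ ⟨⟨r', hr'⟩, t', ht'⟩ h
      have h' : splitBottom r t = splitBottom r' t' := congrArg Subtype.val h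
      obtain rfl : r = r' := by
        have := congrArg (List.map mergeBottom) h'
        rwa [map_mergeBottom_splitBottom t hr.one_le, map_mergeBottom_splitBottom t' hr'.one_le]
          at this
      have := congrArg (List.count 1) h'
      rw [count_one_splitBottom _ hr.one_le, count_one_splitBottom _ hr.one_le] at this
      dsimp only at ht ht'
      obtain rfl : t = t' := by omega
      rfl
    · rintro ⟨r, hr⟩
      rw [columnHeights_cons_true] at hr
      refine ⟨⟨⟨r.map mergeBottom, hr.map_mergeBottom hc⟩, r.count 1, ?_⟩,
        Subtype.ext (splitBottom_map_mergeBottom hc hr)⟩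
      change r.count 1 < (r.map mergeBottom).count 1 + 1
      have := count_one_map_mergeBottom hr.one_le
      omega

lemma count_one_fillingConsTrue {w : List Bool} (p : Σ r : Filling w, Fin (r.1.count 1 + 1)) :
    (fillingConsTrue w p).1.count 1 = p.2 := by
  have := p.2.2
  change (splitBottom p.1.1 p.2).count 1 = p.2
  rw [count_one_splitBottom _ p.1.2.one_le]
  omega

end CatalanTableau

open CatalanTableau BinTree in
theorem exists_filling_equiv_withCanopyFull (u : List Bool) :
    ∃ e : Filling u ≃ WithCanopyFull (u ++ [false]),
      ∀ r, (e r).1.leftBranchLen = r.1.count 1 + 1 := by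
  induction u with
  | nil =>
    have eq_nil (r : Filling []) : r.1 = [] := by
      obtain ⟨_ | _, hr⟩ := r
      exacts [rfl, hr.elim]
    refine ⟨⟨fun _ => ⟨node nil nil, rfl⟩, fun _ => ⟨[], trivial⟩,
      fun r => Subtype.ext (eq_nil r).symm,
      fun B => Subtype.ext (eq_node_nil_nil_of_canopyFull B.2).symm⟩, fun r => ?_⟩
    simp [eq_nil r, leftBranchLen]
  | cons b w ih =>
    obtain ⟨e, he⟩ := ih
    cases b with
    | false =>
      refine ⟨(fillingConsFalse w).symm.trans (e.trans (withCanopyFullConsFalse _)), fun r => ?_⟩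
      obtain ⟨s, rfl⟩ := (fillingConsFalse w).surjective r
      simp [leftBranchLen_withCanopyFullConsFalse, he, count_one_fillingConsFalse]
    | true =>
      refine ⟨(fillingConsTrue w).symm.trans
        ((Equiv.sigmaCongr e fun r => finCongr (he r).symm).trans (withCanopyFullConsTrue _)),
        fun r => ?_⟩
      obtain ⟨p, rfl⟩ := (fillingConsTrue w).surjective r
      simp [leftBranchLen_withCanopyFullConsTrue, count_one_fillingConsTrue, Equiv.sigmaCongr]

/-! ### The shape determined by a profile -/

lemma List.replicate_append_inj {α : Type*} {c : α} {a b : ℕ} {x y : List α}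
    (hx : x.head? ≠ some c) (hy : y.head? ≠ some c)
    (h : List.replicate a c ++ x = List.replicate b c ++ y) : a = b ∧ x = y := by
  induction a generalizing b with
  | zero => cases b with
    | zero => exact ⟨rfl, h⟩
    | succ b =>
      simp only [List.replicate_zero, List.nil_append, List.replicate_succ, List.cons_append] at h
      simp [h] at hx
  | succ a ih => cases b with
    | zero =>
      simp only [List.replicate_zero, List.nil_append, List.replicate_succ, List.cons_append] at h
      simp [← h] at hy
    | succ b =>
      simp only [List.replicate_succ, List.cons_append, List.cons.injEq, true_and] at h
      simpa using ih h

namespace CatalanTableau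

/-- Border word of the diagram with rows of lengths `lam 0 ≥ … ≥ lam (k - 1)` (bottom to top),
with `lam k` read as the length of the row above the diagram. -/
def borderWord (k : ℕ) (lam : ℕ → ℕ) : List Bool :=
  (List.finRange k).flatMap fun i => true :: List.replicate (lam i.1 - lam (i.1 + 1)) false

lemma borderWord_zero (lam : ℕ → ℕ) : borderWord 0 lam = [] := rfl

lemma borderWord_succ (k : ℕ) (lam : ℕ → ℕ) :
    borderWord (k + 1) lam =
      true :: (List.replicate (lam 0 - lam 1) false ++ borderWord k fun i => lam (i + 1)) := by
  rw [borderWord, List.finRange_succ, List.flatMap_cons, List.flatMap_map]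
  rfl

lemma head?_borderWord_ne (k : ℕ) (lam : ℕ → ℕ) : (borderWord k lam).head? ≠ some false := by
  cases k <;> simp [borderWord_zero, borderWord_succ]

lemma count_true_borderWord (k : ℕ) (lam : ℕ → ℕ) : (borderWord k lam).count true = k := by
  induction k generalizing lam with
  | zero => rfl
  | succ k ih => simp [borderWord_succ, List.count_replicate, ih]

lemma borderWord_inj {k k' : ℕ} {lam lam' : ℕ → ℕ} (hlam : Antitone lam) (hlam' : Antitone lam')
    (hk : ∀ i, k ≤ i → lam i = 0) (hk' : ∀ i, k' ≤ i → lam' i = 0)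
    (h : borderWord k lam = borderWord k' lam') : k = k' ∧ lam = lam' := by
  obtain rfl : k = k' := by
    simpa [count_true_borderWord] using congrArg (List.count true) h
  refine ⟨rfl, ?_⟩
  induction k generalizing lam lam' with
  | zero => funext i; rw [hk i (Nat.zero_le i), hk' i (Nat.zero_le i)]
  | succ k ih =>
    rw [borderWord_succ, borderWord_succ, List.cons.injEq] at h
    obtain ⟨hd, htl⟩ :=
      List.replicate_append_inj (head?_borderWord_ne _ _) (head?_borderWord_ne _ _) h.2
    have hsucc := ih (fun _ _ hij => hlam (Nat.succ_le_succ hij))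
      (fun _ _ hij => hlam' (Nat.succ_le_succ hij)) (fun i hi => hk (i + 1) (by omega))
      (fun i hi => hk' (i + 1) (by omega)) htl
    funext i
    cases i with
    | zero =>
      have h1 : lam 1 = lam' 1 := congrFun hsucc 0
      have h2 : lam 1 ≤ lam 0 := hlam (Nat.zero_le 1)
      have h3 : lam' 1 ≤ lam' 0 := hlam' (Nat.zero_le 1)
      omega
    | succ i => exact congrFun hsucc i

/-- Row lengths, bottom to top, of the diagram with profile `u`. -/
def rowLengths : List Bool → ℕ → ℕ
  | [], _ => 0
  | false :: w, 0 => rowLengths w 0 + 1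
  | false :: w, i + 1 => rowLengths w (i + 1)
  | true :: w, 0 => rowLengths w 0
  | true :: w, i + 1 => rowLengths w i

lemma rowLengths_zero (u : List Bool) : rowLengths u 0 = u.count false := by
  induction u with
  | nil => rfl
  | cons b w ih => cases b <;> simp [rowLengths, ih]

lemma rowLengths_antitone (u : List Bool) : Antitone (rowLengths u) := by
  refine antitone_nat_of_succ_le fun i => ?_
  induction u generalizing i with
  | nil => exact le_rfl
  | cons b w ih =>
    cases b <;> cases i
    · have := ih 0; simp only [rowLengths]; omega
    all_goals simp only [rowLengths]; first | exact le_rfl | exact ih _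

lemma rowLengths_le (u : List Bool) (i : ℕ) : rowLengths u i ≤ u.count false :=
  rowLengths_zero u ▸ rowLengths_antitone u (Nat.zero_le i)

lemma rowLengths_of_le {u : List Bool} {i : ℕ} (hi : u.count true + 1 ≤ i) :
    rowLengths u i = 0 := by
  induction u generalizing i with
  | nil => rfl
  | cons b w ih =>
    obtain ⟨i, rfl⟩ : ∃ i', i = i' + 1 := ⟨i - 1, by omega⟩
    cases b <;> simp only [rowLengths] <;> apply ih <;> simp at hi ⊢ <;> omega

theorem borderWord_rowLengths (u : List Bool) :
    borderWord (u.count true + 1) (rowLengths u) = true :: u := by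
  induction u with
  | nil => simp [borderWord_succ, borderWord_zero, rowLengths]
  | cons b w ih =>
    cases b with
    | false =>
      have := rowLengths_antitone w (Nat.zero_le 1)
      rw [borderWord_succ, List.cons.injEq] at ih
      rw [List.count_cons_of_ne (by decide), borderWord_succ]
      simp only [rowLengths, show rowLengths w 0 + 1 - rowLengths w 1 =
        rowLengths w 0 - rowLengths w 1 + 1 by omega, List.replicate_succ, List.cons_append, ih.2]
    | true =>
      rw [List.count_cons_self, borderWord_succ]
      change true :: (List.replicate (rowLengths w 0 - rowLengths w 0) false ++
        borderWord (w.count true + 1) (rowLengths w)) = _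
      rw [Nat.sub_self, List.replicate_zero, List.nil_append, ih]

lemma length_columnHeights (u : List Bool) : (columnHeights u).length = u.count false := by
  suffices ∀ h, (eastHeightsAux h u).length = u.count false from this 1
  induction u with
  | nil => simp [eastHeightsAux]
  | cons b w ih => cases b <;> simp [eastHeightsAux, ih]

lemma le_of_mem_columnHeights {u : List Bool} {c : ℕ} (hc : c ∈ columnHeights u) :
    c ≤ u.count true + 1 := by
  induction u generalizing c with
  | nil => simp [columnHeights, eastHeights, eastHeightsAux] at hc
  | cons b w ih =>
    cases b
    · rw [columnHeights_cons_false, List.mem_cons] at hc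
      rcases hc with rfl | hc
      · omega
      · simpa using ih hc
    · rw [columnHeights_cons_true, List.mem_map] at hc
      obtain ⟨c, hc, rfl⟩ := hc
      simpa using ih hc

/-- Cell `(i, j)` of the rectangle lies in the diagram with profile `u` iff `i < c j`. -/
lemma sub_rowLengths_le_iff {u : List Bool} {i j : ℕ} (hj : j < (columnHeights u).length) :
    u.count false - rowLengths u i ≤ j ↔ i < (columnHeights u)[j] := by
  induction u generalizing i j with
  | nil => simp [columnHeights, eastHeights, eastHeightsAux] at hj
  | cons b w ih =>
    have hle := rowLengths_le w
    cases b
    · simp only [columnHeights_cons_false, List.length_cons] at hj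
      cases j with
      | zero =>
        cases i with
        | zero => simp [rowLengths, rowLengths_zero, columnHeights_cons_false]
        | succ i =>
          have := hle (i + 1)
          simp [rowLengths, columnHeights_cons_false]
          omega
      | succ j =>
        have hj : j < (columnHeights w).length := by omega
        have hpos := one_le_of_mem_columnHeights (List.getElem_mem hj)
        have := ih (i := i) hj
        cases i <;> simp [rowLengths, rowLengths_zero, columnHeights_cons_false] <;> omega
    · simp only [columnHeights_cons_true, List.length_map] at hj
      cases i with
      | zero => simp [rowLengths, rowLengths_zero, columnHeights_cons_true]
      | succ i => simpa [rowLengths, columnHeights_cons_true] using ih hj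

/-! ### Tableaux as fillings -/

variable {n : ℕ}

def rowLength (T : CatalanTableau n) (i : ℕ) : ℕ := if h : i < T.k then T.lam ⟨i, h⟩ else 0

lemma rowLength_of_lt (T : CatalanTableau n) {i : ℕ} (h : i < T.k) :
    T.rowLength i = T.lam ⟨i, h⟩ := dif_pos h

lemma rowLength_antitone (T : CatalanTableau n) : Antitone T.rowLength := by
  intro i j hij
  unfold rowLength
  split_ifs with hj hi hi
  · exact T.lam_anti _ _ hij
  · omega
  · exact Nat.zero_le _
  · exact le_rfl

lemma borderWord_rowLength (T : CatalanTableau n) :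
    borderWord T.k T.rowLength = true :: T.profile := by
  obtain ⟨k, hk⟩ : ∃ k, T.k = k + 1 := ⟨T.k - 1, by have := T.hk; omega⟩
  have hw : borderWord T.k T.rowLength = (List.finRange T.k).flatMap fun i => true ::
      List.replicate (T.lam i - if h : i.1 + 1 < T.k then T.lam ⟨i + 1, h⟩ else 0) false := by
    simp only [borderWord, T.rowLength_of_lt (Fin.is_lt _)]
    rfl
  rw [CatalanTableau.profile, ← hw, hk, borderWord_succ, List.tail_cons]

lemma shape_of_profile (T : CatalanTableau n) {u : List Bool} (hp : T.profile = u) :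
    T.k = u.count true + 1 ∧ T.m = u.count false ∧ T.rowLength = rowLengths u := by
  obtain ⟨hk, hlam⟩ := borderWord_inj T.rowLength_antitone (rowLengths_antitone u)
    (fun i (hi : T.k ≤ i) => dif_neg (by omega)) (fun i => rowLengths_of_le)
    (by rw [borderWord_rowLength, borderWord_rowLengths, hp])
  refine ⟨hk, ?_, hlam⟩
  rw [← rowLengths_zero, ← hlam, T.rowLength_of_lt T.hk, T.lam_first]

lemma sub_lam_le_iff (T : CatalanTableau n) {u : List Bool} (hp : T.profile = u) (i : Fin T.k)
    {j : ℕ} (hj : j < (columnHeights u).length) :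
    T.m - T.lam i ≤ j ↔ i < (columnHeights u)[j] := by
  obtain ⟨-, hm, hlam⟩ := T.shape_of_profile hp
  rw [hm, show T.lam i = rowLengths u i by rw [← hlam, T.rowLength_of_lt i.2]]
  exact sub_rowLengths_le_iff hj

lemma sub_lam_le_of_f (T : CatalanTableau n) {i : Fin T.k} {j : Fin T.m} (h : T.f i j = true) :
    T.m - T.lam i ≤ j := by
  by_contra hlt
  rw [T.f_outside i j (by omega)] at h
  exact Bool.false_ne_true h

noncomputable def oneRow (T : CatalanTableau n) (j : Fin T.m) : Fin T.k :=
  Fintype.choose _ (T.col_one j)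

lemma f_eq_decide_oneRow (T : CatalanTableau n) (i : Fin T.k) (j : Fin T.m) :
    T.f i j = decide (T.oneRow j = i) := by
  have hone := Fintype.choose_spec _ (T.col_one j)
  by_cases h : T.oneRow j = i
  · rw [← h, decide_eq_true rfl]
    exact hone
  · rw [decide_eq_false h, Bool.eq_false_iff]
    exact fun hi => h ((T.col_one j).unique hone hi)

noncomputable def toFilling (T : CatalanTableau n) : List ℕ :=
  (List.finRange T.m).map fun j => T.oneRow j + 1

@[simp]
lemma length_toFilling (T : CatalanTableau n) : T.toFilling.length = T.m := by
  simp [toFilling]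

lemma getElem_toFilling (T : CatalanTableau n) {j : ℕ} (hj : j < T.toFilling.length) :
    T.toFilling[j] = T.oneRow ⟨j, by simpa using hj⟩ + 1 := by
  simp [toFilling]

lemma isFilling_toFilling (T : CatalanTableau n) {u : List Bool} (hp : T.profile = u) :
    IsFilling (columnHeights u) T.toFilling := by
  obtain ⟨-, hm, -⟩ := T.shape_of_profile hp
  have f_oneRow (j : Fin T.m) : T.f (T.oneRow j) j = true := by simp [f_eq_decide_oneRow]
  refine isFilling_of_getElem (by simp [length_columnHeights, hm]) (fun j hj hj' => ?_)
    (fun j j' hjj hj' hjc => ?_) <;> simp only [getElem_toFilling]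
  · have := (T.sub_lam_le_iff hp _ hj').mp (T.sub_lam_le_of_f (f_oneRow ⟨j, by simpa using hj⟩))
    omega
  · by_contra! hcon
    set j₁ : Fin T.m := ⟨j, by simp at hj'; omega⟩
    set j₂ : Fin T.m := ⟨j', by simpa using hj'⟩
    have hin := (T.sub_lam_le_iff hp (T.oneRow j₂) hjc).mpr (by omega)
    have hzero : T.f (T.oneRow j₂) j₁ = false := by
      rw [f_eq_decide_oneRow, decide_eq_false_iff_not]
      exact fun h => by rw [h] at hcon; omega
    exact T.no_bad _ j₁ hin hzero
      ⟨⟨T.oneRow j₁, by rw [Fin.lt_def]; omega, f_oneRow j₁⟩, ⟨j₂, hjj, f_oneRow j₂⟩⟩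

lemma length_of_filling {u : List Bool} (r : Filling u) : r.1.length = u.count false := by
  rw [r.2.length_eq, length_columnHeights]

def ofFilling (u : List Bool) (r : Filling u) : CatalanTableau (u.length + 1) where
  k := u.count true + 1
  m := u.count false
  hk := Nat.succ_pos _
  hkm := by rw [add_right_comm, List.count_true_add_count_false]
  lam i := rowLengths u i
  lam_le i := rowLengths_le u i
  lam_first := rowLengths_zero u
  lam_anti _ _ hij := rowLengths_antitone u hij
  f i j := decide (r.1[j.1]'(by rw [length_of_filling]; exact j.2) = i + 1)
  f_outside i j hij := by
    have hj : j.1 < (columnHeights u).length := by rw [length_columnHeights]; exact j.2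
    have := r.2.getElem_le (by rw [length_of_filling]; exact j.2) hj
    have := (sub_rowLengths_le_iff (i := i) hj).not.mp (by omega)
    simp only [decide_eq_false_iff_not]
    omega
  col_one j := by
    have hj : j.1 < (columnHeights u).length := by rw [length_columnHeights]; exact j.2
    have hr := r.2.getElem_le (by rw [length_of_filling]; exact j.2) hj
    have := le_of_mem_columnHeights (List.getElem_mem hj)
    refine ⟨⟨r.1[j.1]'(by rw [length_of_filling]; exact j.2) - 1, by omega⟩, by simp; omega,
      fun i hi => Fin.ext ?_⟩
    simp only [decide_eq_true_eq] at hi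
    show (i : ℕ) = _ - 1
    omega
  no_bad i j hin _ := by
    rintro ⟨⟨i', hi'i, hi'⟩, ⟨j', hjj', hj'⟩⟩
    simp only [decide_eq_true_eq] at hi' hj'
    have hj : j.1 < (columnHeights u).length := by rw [length_columnHeights]; exact j.2
    have := (sub_rowLengths_le_iff hj).mp hin
    have := r.2.getElem_le_or_lt hjj' (by rw [length_of_filling]; exact j'.2) hj
    rw [Fin.lt_def] at hi'i
    omega

lemma profile_ofFilling (u : List Bool) (r : Filling u) : (ofFilling u r).profile = u := by
  have hrow : (ofFilling u r).rowLength = rowLengths u := by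
    funext i
    unfold rowLength
    split_ifs with h
    · rfl
    · exact (rowLengths_of_le (not_lt.mp h)).symm
  have := (ofFilling u r).borderWord_rowLength
  rw [hrow, show (ofFilling u r).k = u.count true + 1 from rfl, borderWord_rowLengths] at this
  exact (List.cons.inj this).2.symm

lemma ext_of_val {T S : CatalanTableau n} (hk : T.k = S.k) (hm : T.m = S.m)
    (hlam : ∀ i (hT : i < T.k) (hS : i < S.k), T.lam ⟨i, hT⟩ = S.lam ⟨i, hS⟩)
    (hf : ∀ i j (hiT : i < T.k) (hiS : i < S.k) (hjT : j < T.m) (hjS : j < S.m),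
      T.f ⟨i, hiT⟩ ⟨j, hjT⟩ = S.f ⟨i, hiS⟩ ⟨j, hjS⟩) : T = S := by
  obtain ⟨k, m, _, _, lam, _, _, _, f, _, _, _⟩ := T
  obtain ⟨k', m', _, _, lam', _, _, _, f', _, _, _⟩ := S
  subst hk hm
  obtain rfl : lam = lam' := funext fun i => hlam i i.2 i.2
  obtain rfl : f = f' := funext fun i => funext fun j => hf i j i.2 i.2 j.2 j.2
  rfl

noncomputable def equivFilling (u : List Bool) :
    {T : CatalanTableau (u.length + 1) // T.profile = u} ≃ Filling u where
  toFun T := ⟨T.1.toFilling, T.1.isFilling_toFilling T.2⟩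
  invFun r := ⟨ofFilling u r, profile_ofFilling u r⟩
  left_inv := by
    rintro ⟨T, hp⟩
    obtain ⟨hk, hm, hlam⟩ := T.shape_of_profile hp
    refine Subtype.ext (ext_of_val hk.symm hm.symm (fun i _ hi => ?_) (fun i j _ hi _ hj => ?_))
    · rw [← T.rowLength_of_lt hi, hlam]
      rfl
    · change decide (T.toFilling[j]'(by simpa using hj) = i + 1) = _
      simp [getElem_toFilling, f_eq_decide_oneRow, Fin.ext_iff]
  right_inv := by
    rintro ⟨r, hr⟩
    refine Subtype.ext (List.ext_getElem (by simp [length_of_filling ⟨r, hr⟩, ofFilling])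
      fun j h₁ h₂ => ?_)
    rw [getElem_toFilling]
    have := (ofFilling u ⟨r, hr⟩).f_eq_decide_oneRow
      ((ofFilling u ⟨r, hr⟩).oneRow ⟨j, by simpa using h₁⟩) ⟨j, by simpa using h₁⟩
    simp only [decide_true, ofFilling, decide_eq_true_eq] at this
    exact this.symm

end CatalanTableau

/-- For every integer `n ≥ 1` and every word `u` of length `n - 1`
over `{a, b}`, the number of Catalan tableaux of index `n` whose profile is `u`
equals the number of binary trees with `n` vertices whose canopy is `u`. -/
theorem card_catalanTableau_profile_eq_card_binTree_canopy
    (n : ℕ) (hn : 1 ≤ n) (u : List Bool) (hu : u.length = n - 1) :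
    Nat.card {T : CatalanTableau n // T.profile = u} =
      Nat.card {B : BinTree // B.size = n ∧ B.canopy = u} := by
  obtain rfl : n = u.length + 1 := by omega
  obtain ⟨e, -⟩ := exists_filling_equiv_withCanopyFull u
  calc Nat.card {T : CatalanTableau (u.length + 1) // T.profile = u}
      = Nat.card (CatalanTableau.Filling u) := Nat.card_congr (CatalanTableau.equivFilling u)
    _ = Nat.card (BinTree.WithCanopyFull (u ++ [false])) := Nat.card_congr e
    _ = _ := Nat.card_congr <|
      Equiv.subtypeEquivRight fun _ => BinTree.canopyFull_eq_append_false_iff
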